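/- Let p be an odd prime, m > 1, χ a primitive multiplicative character mod p^m, and a₀, a₁, …, a_n units in ℤ/p^mℤ. Then Σ_{x ∈ (ℤ/p^mℤ)^n} χ(a₀ + a₁x₁² + … + a_n x_n²) = χ(a₀) · χ_{1/2}(a₀^n a₁⋯a_n)^m · α̃(χ,m)^n, where α̃(χ,m) = Σ_{x ∈ ℤ/p^mℤ} χ(1 + x²) and χ_{1/2} is the Legendre symbol mod p. -/

import Mathlib

open Finset

/-- A multiplicative character mod `p^m` is primitive if it is not induced by a
character mod `p^n` for any `n < m`. -/
def MulPrimitive (p m : ℕ) (χ : MulChar (ZMod (p ^ m)) ℂ) : Prop :=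
  ∀ n : ℕ, ∀ hn : n < m, ∀ χ₁ : MulChar (ZMod (p ^ n)) ℂ,
    ∃ a : ZMod (p ^ m), χ a ≠ χ₁ (ZMod.castHom (pow_dvd_pow p hn.le) (ZMod (p ^ n)) a)


section Aux

variable {p : ℕ} [hp : Fact p.Prime]

lemma sum_addmul_eq_zero {q : ℕ} [NeZero q] (f : ZMod q → ℂ)
    (hadd : ∀ a b, f (a + b) = f a * f b) {a₀ : ZMod q} (h : f a₀ ≠ 1) :
    ∑ a, f a = 0 := by
  have key : f a₀ * ∑ a, f a = 1 * ∑ a, f a := by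
    rw [Finset.mul_sum, one_mul]
    exact Fintype.sum_equiv (Equiv.addLeft a₀) _ _ (fun a => (hadd a₀ a).symm)
  by_contra hs
  exact h (mul_right_cancel₀ hs key)

lemma isUnit_zmod_pow_iff {k : ℕ} (hk : k ≠ 0) (x : ZMod (p ^ k)) :
    IsUnit x ↔ ¬ p ∣ x.val := by
  constructor
  · intro hx hdvd
    have h2 := (ZMod.isUnit_iff_coprime x.val (p ^ k)).mp (by rwa [ZMod.natCast_rightInverse x])
    have h1 : p ∣ p ^ k := dvd_pow_self p hk
    have h3 : p = 1 := (Nat.Coprime.coprime_dvd_right h1 h2).symm.eq_one_of_dvd hdvd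
    exact hp.out.ne_one h3
  · intro hx
    rw [← ZMod.natCast_rightInverse x, ZMod.isUnit_iff_coprime]
    exact Nat.Coprime.pow_right k ((Nat.Prime.coprime_iff_not_dvd hp.out).mpr hx).symm

end Aux

section Mach

variable {p m : ℕ} [hp : Fact p.Prime] (χ : MulChar (ZMod (p ^ m)) ℂ)
set_option linter.unusedSectionVars false

omit hp in
lemma pow_m_eq_zero : (p : ZMod (p ^ m)) ^ m = 0 := by
  rw [← Nat.cast_pow, ZMod.natCast_self]

lemma Pmul_mod {i : ℕ} (him : i ≤ m) (a : ℕ) :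
    (p : ZMod (p ^ m)) ^ (m - i) * ((a % p ^ i : ℕ) : ZMod (p ^ m)) =
      (p : ZMod (p ^ m)) ^ (m - i) * (a : ZMod (p ^ m)) := by
  have h0 : (p : ZMod (p ^ m)) ^ (m - i) * (p : ZMod (p ^ m)) ^ i = 0 := by
    rw [← pow_add, Nat.sub_add_cancel him, pow_m_eq_zero]
  conv_rhs => rw [← Nat.div_add_mod a (p ^ i)]
  push_cast
  rw [mul_add, ← mul_assoc]
  rw [h0, zero_mul, zero_add]

lemma Pmul_sq {i : ℕ} (h2i : 2 * i ≤ m) :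
    ((p : ZMod (p ^ m)) ^ (m - i)) ^ 2 = 0 := by
  rw [← pow_mul]
  have h : m ≤ (m - i) * 2 := by omega
  calc (p : ZMod (p ^ m)) ^ ((m - i) * 2)
      = (p : ZMod (p ^ m)) ^ m * (p : ZMod (p ^ m)) ^ ((m - i) * 2 - m) := by
        rw [← pow_add, Nat.add_sub_cancel' h]
    _ = 0 := by rw [pow_m_eq_zero, zero_mul]

/-- the "local additive character" attached to `χ` at depth `i` -/
noncomputable def psiC (q i : ℕ) (w : ZMod q) : ℂ :=
  χ (1 + (p : ZMod (p ^ m)) ^ (m - i) * ((w.val : ℕ) : ZMod (p ^ m)))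

lemma psiC_zero (q i : ℕ) [NeZero q] : psiC χ q i 0 = 1 := by
  unfold psiC
  rw [ZMod.val_zero, Nat.cast_zero, mul_zero, add_zero, map_one]

lemma psiC_add {q i : ℕ} (hq : q = p ^ i) (h2i : 2 * i ≤ m) (w w' : ZMod q) :
    psiC χ q i (w + w') = psiC χ q i w * psiC χ q i w' := by
  have him : i ≤ m := le_trans (by omega) h2i
  unfold psiC
  rw [← map_mul]
  congr 1
  have hval : ((w + w').val : ZMod (p ^ m)) = ((w.val + w'.val) % (p ^ i) : ℕ) := by
    subst hq; rw [ZMod.val_add]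
  rw [hval, Pmul_mod him]
  push_cast
  have hP2 := Pmul_sq (p := p) (m := m) (i := i) h2i
  linear_combination (-((w.val : ZMod (p ^ m)) * (w'.val : ZMod (p ^ m)))) * hP2

lemma psiC_finsum {q i : ℕ} (hq : q = p ^ i) (h2i : 2 * i ≤ m) {ι : Type*} (s : Finset ι)
    (g : ι → ZMod q) : psiC χ q i (∑ j ∈ s, g j) = ∏ j ∈ s, psiC χ q i (g j) := by
  haveI : NeZero q := by subst hq; infer_instance
  induction s using Finset.cons_induction with
  | empty => simpa using psiC_zero χ q i
  | cons a s ha ih =>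
    rw [Finset.sum_cons, Finset.prod_cons, psiC_add χ hq h2i, ih]

lemma psiC_eval {q i : ℕ} (hq : q = p ^ i) (h2i : 2 * i ≤ m) (hdvd : q ∣ p ^ m)
    (C : ZMod (p ^ m)) :
    χ (1 + (p : ZMod (p ^ m)) ^ (m - i) * C) =
      psiC χ q i (ZMod.castHom hdvd (ZMod q) C) := by
  have him : i ≤ m := le_trans (by omega) h2i
  subst hq
  unfold psiC
  congr 2
  have h1 : (ZMod.castHom hdvd (ZMod (p ^ i)) C) = ((C.val : ℕ) : ZMod (p ^ i)) := by
    rw [ZMod.castHom_apply, ← ZMod.natCast_val]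
  rw [h1, ZMod.val_natCast, Pmul_mod him, ZMod.natCast_val, ZMod.cast_id]

lemma sum_psiC {q i : ℕ} [NeZero q] (hq : q = p ^ i) (hi1 : 1 ≤ i) (h2i : 2 * i ≤ m)
    (hpr : ∃ e : ZMod (p ^ m), χ (1 + (p : ZMod (p ^ m)) ^ (m - 1) * e) ≠ 1)
    (d : ZMod q) :
    ∑ w : ZMod q, psiC χ q i (d * w) = if d = 0 then (q : ℂ) else 0 := by
  have him : i ≤ m := le_trans (by omega) h2i
  haveI : NeZero q := by subst hq; infer_instance
  rcases eq_or_ne d 0 with hd | hd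
  · subst hd
    simp only [zero_mul, psiC_zero χ q i, if_pos rfl]
    rw [Finset.sum_const, Finset.card_univ, ZMod.card, nsmul_eq_mul, mul_one, if_pos trivial]
  · rw [if_neg hd]
    subst hq
    obtain ⟨e, he⟩ := hpr
    set E : ZMod (p ^ i) := ZMod.castHom (pow_dvd_pow p him) (ZMod (p ^ i)) e with hE
    -- p-adic valuation decomposition of d.val
    have hdval : d.val ≠ 0 := fun h => hd (by rwa [ZMod.val_eq_zero] at h)
    set k := (d.val).factorization p with hk
    set t := d.val / p ^ k with ht
    have hdk : p ^ k ∣ d.val := Nat.ordProj_dvd d.val p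
    have hteq : p ^ k * t = d.val := Nat.ordProj_mul_ordCompl_eq_self d.val p
    have htnd : ¬ p ∣ t := Nat.not_dvd_ordCompl hp.out hdval
    have hki : k < i := by
      have h1 : p ^ k ≤ d.val := Nat.le_of_dvd (Nat.pos_of_ne_zero hdval) hdk
      have h2 : d.val < p ^ i := ZMod.val_lt d
      exact (Nat.pow_lt_pow_iff_right hp.out.one_lt).mp (lt_of_le_of_lt h1 h2)
    have htu : IsUnit ((t : ℕ) : ZMod (p ^ i)) := by
      rw [ZMod.isUnit_iff_coprime]
      exact Nat.Coprime.pow_right i ((Nat.Prime.coprime_iff_not_dvd hp.out).mpr htnd).symm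
    set u := htu.unit with hu
    set w₀ : ZMod (p ^ i) := ↑u⁻¹ * (p : ZMod (p ^ i)) ^ (i - 1 - k) * E with hw₀
    have hdw : d * w₀ = (p : ZMod (p ^ i)) ^ (i - 1) * E := by
      have hdcast : d = (p : ZMod (p ^ i)) ^ k * ((t : ℕ) : ZMod (p ^ i)) := by
        rw [← ZMod.natCast_rightInverse d, ← hteq]; push_cast; ring
      rw [hw₀, hdcast]
      have htu' : ((t : ℕ) : ZMod (p ^ i)) * ↑u⁻¹ = 1 := by
        have hspec : (↑u : ZMod (p ^ i)) = ((t : ℕ) : ZMod (p ^ i)) := htu.unit_spec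
        rw [← hspec]; exact u.mul_inv
      calc (p : ZMod (p ^ i)) ^ k * (t : ZMod (p ^ i)) * (↑u⁻¹ * (p : ZMod (p ^ i)) ^ (i - 1 - k) * E)
          = ((t : ZMod (p ^ i)) * ↑u⁻¹) * ((p : ZMod (p ^ i)) ^ k * (p : ZMod (p ^ i)) ^ (i - 1 - k)) * E := by ring
        _ = (p : ZMod (p ^ i)) ^ (i - 1) * E := by
            rw [htu', one_mul, ← pow_add, Nat.add_sub_cancel' (by omega : k ≤ i - 1)]
    have hpsi : psiC χ (p ^ i) i (d * w₀) = χ (1 + (p : ZMod (p ^ m)) ^ (m - 1) * e) := by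
      rw [hdw]
      have hC : (p : ZMod (p ^ i)) ^ (i - 1) * E =
          ZMod.castHom (pow_dvd_pow p him) (ZMod (p ^ i)) ((p : ZMod (p ^ m)) ^ (i - 1) * e) := by
        rw [map_mul, map_pow, map_natCast]
      rw [hC, ← psiC_eval χ rfl h2i (pow_dvd_pow p him)]
      congr 2
      rw [← mul_assoc, ← pow_add]
      congr 2
      omega
    exact sum_addmul_eq_zero (fun w => psiC χ (p ^ i) i (d * w))
      (fun a b => by rw [mul_add]; exact psiC_add χ rfl h2i _ _) (hpsi ▸ he)

end Mach

lemma prim_nontrivial {p m : ℕ} [hp : Fact p.Prime] (hm : 1 < m)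
    (χ : MulChar (ZMod (p ^ m)) ℂ) (hχ : MulPrimitive p m χ) :
    ∃ e : ZMod (p ^ m), χ (1 + (p : ZMod (p ^ m)) ^ (m - 1) * e) ≠ 1 := by
  by_contra hcon
  push_neg at hcon
  have hd : p ^ (m - 1) ∣ p ^ m := pow_dvd_pow p (by omega)
  have hker : (ZMod.unitsMap hd).ker ≤ χ.toUnitHom.ker := by
    intro u hu
    rw [MonoidHom.mem_ker] at hu ⊢
    have hcast : ZMod.castHom hd (ZMod (p ^ (m - 1))) (↑u : ZMod (p ^ m)) = 1 := by
      have : (↑(ZMod.unitsMap hd u) : ZMod (p ^ (m - 1))) = 1 := by rw [hu]; rfl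
      rwa [ZMod.unitsMap_def, Units.coe_map] at this
    set x : ZMod (p ^ m) := (↑u : ZMod (p ^ m)) - 1 with hx
    have hx0 : ZMod.castHom hd (ZMod (p ^ (m - 1))) x = 0 := by
      rw [hx, map_sub, hcast, map_one, sub_self]
    have hxdvd : p ^ (m - 1) ∣ x.val := by
      have h1 : ((x.val : ℕ) : ZMod (p ^ (m - 1))) = 0 := by
        rwa [ZMod.natCast_val, ← ZMod.castHom_apply (h := hd)]
      exact (ZMod.natCast_eq_zero_iff _ _).mp h1
    obtain ⟨c, hc⟩ := hxdvd
    have hueq : (↑u : ZMod (p ^ m)) = 1 + (p : ZMod (p ^ m)) ^ (m - 1) * (c : ZMod (p ^ m)) := by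
      have : x = ((p ^ (m - 1) * c : ℕ) : ZMod (p ^ m)) := by
        rw [← hc, ZMod.natCast_val, ZMod.cast_id]
      rw [hx] at this
      push_cast at this
      linear_combination this
    have := hcon (c : ZMod (p ^ m))
    rw [← hueq] at this
    apply Units.ext
    rw [MulChar.coe_toUnitHom, this, Units.val_one]
  haveI : NeZero (p ^ m) := inferInstance
  obtain ⟨hdvd, χ₀, hfac⟩ := (DirichletCharacter.factorsThrough_iff_ker_unitsMap hd).mpr hker
  obtain ⟨a, hane⟩ := hχ (m - 1) (by omega) χ₀
  apply hane
  by_cases haU : IsUnit a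
  · rw [hfac]
    have h1 := DirichletCharacter.changeLevel_eq_cast_of_dvd χ₀ hdvd haU.unit
    rw [haU.unit_spec] at h1
    rw [h1, ZMod.castHom_apply]
  · have h2 : ¬ IsUnit (ZMod.castHom (pow_dvd_pow p (by omega : m - 1 ≤ m)) (ZMod (p ^ (m - 1))) a) := by
      intro hU
      apply haU
      rw [isUnit_zmod_pow_iff (by omega : m ≠ 0)]
      rw [isUnit_zmod_pow_iff (by omega : m - 1 ≠ 0)] at hU
      intro hdvd'
      apply hU
      have hval : (ZMod.castHom (pow_dvd_pow p (by omega : m - 1 ≤ m)) (ZMod (p ^ (m - 1))) a).val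
          = a.val % p ^ (m - 1) := by
        rw [ZMod.castHom_apply, ← ZMod.natCast_val, ZMod.val_natCast]
      rw [hval]
      exact (Nat.dvd_mod_iff (dvd_pow_self p (by omega : m - 1 ≠ 0))).mpr hdvd'
    rw [MulChar.map_nonunit χ₀ h2, hfac, MulChar.map_nonunit _ haU]

section Quad
variable {p : ℕ} [hp : Fact p.Prime]

lemma sum_sq_eq (hodd : p ≠ 2) (F : ZMod p → ℂ) :
    ∑ t : ZMod p, F (t ^ 2) =
      ∑ v : ZMod p, F v + ∑ v : ZMod p, ((quadraticChar (ZMod p) v : ℤ) : ℂ) * F v := by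
  have hcard : ∀ v : ZMod p, ((univ.filter (fun t : ZMod p => t ^ 2 = v)).card : ℂ)
      = ((quadraticChar (ZMod p) v : ℤ) : ℂ) + 1 := by
    intro v
    have h := quadraticChar_card_sqrts ((ZMod.ringChar_zmod_n p).substr hodd) v
    have h2 : ((univ.filter (fun t : ZMod p => t ^ 2 = v)).card : ℤ) = quadraticChar (ZMod p) v + 1 := by
      rw [← h]; norm_cast; congr 1; rw [← Set.toFinset_setOf]
    exact_mod_cast congrArg (fun z : ℤ => (z : ℂ)) h2
  calc ∑ t : ZMod p, F (t ^ 2)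
      = ∑ t : ZMod p, ∑ v : ZMod p, if t ^ 2 = v then F v else 0 := by
        refine Finset.sum_congr rfl fun t _ => ?_
        rw [Finset.sum_ite_eq univ (t ^ 2) F, if_pos (mem_univ _)]
    _ = ∑ v : ZMod p, ∑ t : ZMod p, if t ^ 2 = v then F v else 0 := Finset.sum_comm
    _ = ∑ v : ZMod p, ((univ.filter (fun t : ZMod p => t ^ 2 = v)).card : ℂ) * F v := by
        refine Finset.sum_congr rfl fun v _ => ?_
        rw [← Finset.sum_filter, Finset.sum_const, nsmul_eq_mul]
    _ = _ := by
        rw [← Finset.sum_add_distrib]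
        refine Finset.sum_congr rfl fun v _ => ?_
        rw [hcard v]; ring

lemma quad_twist (hodd : p ≠ 2) (τ : ZMod p → ℂ)
    (hadd : ∀ a b, τ (a + b) = τ a * τ b) (hnt : ∃ x, τ x ≠ 1)
    {b : ZMod p} (hb : b ≠ 0) :
    ∑ t : ZMod p, τ (b * t ^ 2) =
      ((quadraticChar (ZMod p) b : ℤ) : ℂ) * ∑ t : ZMod p, τ (t ^ 2) := by
  obtain ⟨x₀, hx₀⟩ := hnt
  have h0 : ∀ c : ZMod p, c ≠ 0 → ∑ v : ZMod p, τ (c * v) = 0 := by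
    intro c hc
    refine sum_addmul_eq_zero (fun v => τ (c * v))
      (fun a b => by rw [mul_add]; exact hadd _ _) (a₀ := c⁻¹ * x₀) ?_
    rwa [← mul_assoc, mul_inv_cancel₀ hc, one_mul]
  have hswap : ∑ v : ZMod p, ((quadraticChar (ZMod p) v : ℤ) : ℂ) * τ (b * v)
      = ((quadraticChar (ZMod p) b : ℤ) : ℂ) *
        ∑ v : ZMod p, ((quadraticChar (ZMod p) v : ℤ) : ℂ) * τ v := by
    have hbinv : b⁻¹ ≠ 0 := inv_ne_zero hb
    have hqinv : ((quadraticChar (ZMod p) b⁻¹ : ℤ) : ℂ) = ((quadraticChar (ZMod p) b : ℤ) : ℂ) := by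
      have h1 : quadraticChar (ZMod p) b * quadraticChar (ZMod p) b⁻¹ = 1 := by
        rw [← map_mul, mul_inv_cancel₀ hb, map_one]
      have h2 : quadraticChar (ZMod p) b * quadraticChar (ZMod p) b = 1 := by
        have := quadraticChar_sq_one hb; rwa [pow_two] at this
      have : quadraticChar (ZMod p) b⁻¹ = quadraticChar (ZMod p) b :=
        mul_left_cancel₀ (by rintro h; rw [h, zero_mul] at h2; exact one_ne_zero h2.symm)
          (h1.trans h2.symm)
      rw [this]
    calc ∑ v : ZMod p, ((quadraticChar (ZMod p) v : ℤ) : ℂ) * τ (b * v)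
        = ∑ v : ZMod p, ((quadraticChar (ZMod p) (b⁻¹ * v) : ℤ) : ℂ) * τ v := by
          refine Fintype.sum_equiv (Equiv.mulLeft₀ b hb) _ _ fun v => ?_
          show _ = ((quadraticChar (ZMod p) (b⁻¹ * (b * v)) : ℤ) : ℂ) * τ (b * v)
          rw [← mul_assoc, inv_mul_cancel₀ hb, one_mul]
      _ = _ := by
          rw [Finset.mul_sum]
          refine Finset.sum_congr rfl fun v _ => ?_
          rw [map_mul]
          push_cast
          rw [hqinv]
          ring
  have L : ∑ t : ZMod p, τ (b * t ^ 2)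
      = ∑ v : ZMod p, τ (b * v) + ∑ v : ZMod p, ((quadraticChar (ZMod p) v : ℤ) : ℂ) * τ (b * v) := by
    simpa using sum_sq_eq hodd (fun v => τ (b * v))
  have R : ∑ t : ZMod p, τ (t ^ 2)
      = ∑ v : ZMod p, τ v + ∑ v : ZMod p, ((quadraticChar (ZMod p) v : ℤ) : ℂ) * τ v := by
    simpa using sum_sq_eq hodd τ
  have h01 : ∑ v : ZMod p, τ v = 0 := by simpa using h0 1 one_ne_zero
  rw [L, R, h01, h0 b hb, zero_add, zero_add, hswap]

end Quad

section Master
variable {p m : ℕ} [hp : Fact p.Prime] (χ : MulChar (ZMod (p ^ m)) ℂ)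
set_option linter.unusedSectionVars false
set_option maxHeartbeats 1600000 in

lemma master (hodd : p ≠ 2) (hm : 1 < m)
    (hpr : ∃ e : ZMod (p ^ m), χ (1 + (p : ZMod (p ^ m)) ^ (m - 1) * e) ≠ 1)
    (n : ℕ) (a₀ : ZMod (p ^ m)) (a : Fin n → ZMod (p ^ m)) (ha : ∀ i, IsUnit (a i)) :
    ∑ x : Fin n → ZMod (p ^ m), χ (a₀ + ∑ i, a i * x i ^ 2) =
      ((p : ℂ) ^ (m / 2)) ^ n *
        ∑ w : Fin n → ZMod (p ^ (m - 2 * (m / 2))),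
          χ (a₀ + ∑ i, a i *
            ((p : ZMod (p ^ m)) ^ (m / 2) * (((w i).val : ℕ) : ZMod (p ^ m))) ^ 2) := by
  have hp1 : 1 < p := hp.out.one_lt
  set s : ℕ := m - 2 * (m / 2) with hs
  set r : ℕ := m / 2 with hr
  have hr1 : 1 ≤ r := by omega
  have h2r : 2 * r ≤ m := by omega
  have hrm : r ≤ m := by omega
  have hr'm : m - r ≤ m := by omega
  have hrr' : (m - r) + r = m := by omega
  have hpow : p ^ (m - r) * p ^ r = p ^ m := by rw [← pow_add, hrr']
  have hm0 : m ≠ 0 := by omega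
  -- the unit criterion via reduction mod p
  have hunit_iff : ∀ x : ZMod (p ^ m), IsUnit x ↔ ¬ p ∣ x.val :=
    fun x => isUnit_zmod_pow_iff hm0 x
  have hP'sq : ((p : ZMod (p ^ m)) ^ (m - r)) ^ 2 = 0 := Pmul_sq h2r
  -- Step A : reindex
  set e : (Fin n → ZMod (p ^ (m - r))) × (Fin n → ZMod (p ^ r)) → (Fin n → ZMod (p ^ m)) :=
    fun yz i => (((yz.1 i).val : ℕ) : ZMod (p ^ m)) +
      (p : ZMod (p ^ m)) ^ (m - r) * (((yz.2 i).val : ℕ) : ZMod (p ^ m)) with he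
  have hlt : ∀ (b : ZMod (p ^ (m - r))) (c : ZMod (p ^ r)),
      b.val + p ^ (m - r) * c.val < p ^ m := by
    intro b c
    have hb := ZMod.val_lt b
    have hc := ZMod.val_lt c
    have h1 : p ^ (m - r) * c.val + p ^ (m - r) ≤ p ^ (m - r) * p ^ r := by
      calc p ^ (m - r) * c.val + p ^ (m - r) = p ^ (m - r) * (c.val + 1) := by ring
        _ ≤ p ^ (m - r) * p ^ r := Nat.mul_le_mul_left _ (by omega)
    omega
  have hebij : Function.Bijective e := by
    refine (Fintype.bijective_iff_injective_and_card e).mpr ⟨?_, ?_⟩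
    · intro yz yz' heq
      have hcomp : ∀ i, (yz.1 i).val + p ^ (m - r) * (yz.2 i).val
          = (yz'.1 i).val + p ^ (m - r) * (yz'.2 i).val := by
        intro i
        have h1 := congrFun heq i
        have h2 : (((yz.1 i).val + p ^ (m - r) * (yz.2 i).val : ℕ) : ZMod (p ^ m))
            = (((yz'.1 i).val + p ^ (m - r) * (yz'.2 i).val : ℕ) : ZMod (p ^ m)) := by
          push_cast
          simpa [he] using h1
        have h3 := congrArg ZMod.val h2
        rwa [ZMod.val_natCast, ZMod.val_natCast,
          Nat.mod_eq_of_lt (hlt _ _), Nat.mod_eq_of_lt (hlt _ _)] at h3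
      have hy : yz.1 = yz'.1 := by
        funext i
        have h4 := hcomp i
        have h5 : (yz.1 i).val = (yz'.1 i).val := by
          have := congrArg (· % p ^ (m - r)) h4
          simpa [Nat.add_mul_mod_self_left, Nat.mod_eq_of_lt (ZMod.val_lt _)] using this
        exact ZMod.val_injective _ h5
      have hz : yz.2 = yz'.2 := by
        funext i
        have h4 := hcomp i
        have h5 : (yz.2 i).val = (yz'.2 i).val := by
          have := congrArg (· / p ^ (m - r)) h4
          simpa [Nat.add_mul_div_left _ _ (by positivity : 0 < p ^ (m - r)),
            Nat.div_eq_of_lt (ZMod.val_lt _)] using this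
        exact ZMod.val_injective _ h5
      exact Prod.ext hy hz
    · simp only [Fintype.card_prod, Fintype.card_pi, ZMod.card, Finset.prod_const,
        Finset.card_univ, Fintype.card_fin]
      rw [← mul_pow, hpow]
  -- reindex the sum
  have hsum1 : ∑ x : Fin n → ZMod (p ^ m), χ (a₀ + ∑ i, a i * x i ^ 2)
      = ∑ yz : (Fin n → ZMod (p ^ (m - r))) × (Fin n → ZMod (p ^ r)),
          χ (a₀ + ∑ i, a i * (e yz) i ^ 2) :=
    (Fintype.sum_bijective e hebij _ _ (fun yz => rfl)).symm
  rw [hsum1, Fintype.sum_prod_type]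
  set P' : ZMod (p ^ m) := (p : ZMod (p ^ m)) ^ (m - r) with hP'
  have hexp : ∀ (y : Fin n → ZMod (p ^ (m - r))) (z : Fin n → ZMod (p ^ r)),
      a₀ + ∑ i, a i * (e (y, z)) i ^ 2
        = (a₀ + ∑ i, a i * (((y i).val : ℕ) : ZMod (p ^ m)) ^ 2)
          + P' * ∑ i, (2 * a i * (((y i).val : ℕ) : ZMod (p ^ m)))
              * (((z i).val : ℕ) : ZMod (p ^ m)) := by
    intro y z
    have hterm : ∀ i : Fin n, a i * (e (y, z)) i ^ 2
        = a i * (((y i).val : ℕ) : ZMod (p ^ m)) ^ 2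
          + P' * ((2 * a i * (((y i).val : ℕ) : ZMod (p ^ m)))
              * (((z i).val : ℕ) : ZMod (p ^ m))) := by
      intro i
      simp only [he]
      linear_combination (a i * (((z i).val : ℕ) : ZMod (p ^ m)) ^ 2) * hP'sq
    rw [Finset.sum_congr rfl (fun i _ => hterm i), Finset.sum_add_distrib, ← Finset.mul_sum]
    ring
  set π : ZMod (p ^ m) →+* ZMod p := ZMod.castHom (dvd_pow_self p hm0) (ZMod p) with hπdef
  have hπunit : ∀ x : ZMod (p ^ m), IsUnit x ↔ π x ≠ 0 := by
    intro x
    rw [hunit_iff x]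
    have hx : π x = ((x.val : ℕ) : ZMod p) := by
      rw [hπdef, ZMod.castHom_apply, ← ZMod.natCast_val]
    rw [hx, Ne, ZMod.natCast_eq_zero_iff]
  have hπP' : π P' = 0 := by
    rw [hP', map_pow, map_natCast, ZMod.natCast_self, zero_pow (by omega : m - r ≠ 0)]
  have h2unit : IsUnit (2 : ZMod (p ^ m)) := by
    rw [show ((2 : ZMod (p ^ m))) = ((2 : ℕ) : ZMod (p ^ m)) by norm_cast,
      ZMod.isUnit_iff_coprime]
    exact Nat.Coprime.pow_right m
      ((Nat.coprime_primes Nat.prime_two hp.out).mpr (fun h => hodd h.symm))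
  -- inner z-sum
  have hinner : ∀ y : Fin n → ZMod (p ^ (m - r)),
      ∑ z : Fin n → ZMod (p ^ r),
        χ ((a₀ + ∑ i, a i * (((y i).val : ℕ) : ZMod (p ^ m)) ^ 2)
          + P' * ∑ i, (2 * a i * (((y i).val : ℕ) : ZMod (p ^ m)))
              * (((z i).val : ℕ) : ZMod (p ^ m)))
      = χ (a₀ + ∑ i, a i * (((y i).val : ℕ) : ZMod (p ^ m)) ^ 2)
        * ∏ i, (if ((((y i).val : ℕ) : ZMod (p ^ r)) = 0) then ((p ^ r : ℕ) : ℂ) else 0) := by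
    intro y
    set A : ZMod (p ^ m) := a₀ + ∑ i, a i * (((y i).val : ℕ) : ZMod (p ^ m)) ^ 2 with hA
    by_cases hAu : IsUnit A
    · set u := hAu.unit with hu
      have hspec : (↑u : ZMod (p ^ m)) = A := hAu.unit_spec
      have hmulinv : (↑u : ZMod (p ^ m)) * ↑u⁻¹ = 1 := u.mul_inv
      set ρ : ZMod (p ^ m) →+* ZMod (p ^ r) :=
        ZMod.castHom (pow_dvd_pow p hrm) (ZMod (p ^ r)) with hρ
      set d : Fin n → ZMod (p ^ r) :=
        fun i => ρ (↑u⁻¹ * (2 * a i * (((y i).val : ℕ) : ZMod (p ^ m)))) with hd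
      have hzstep : ∀ z : Fin n → ZMod (p ^ r),
          χ (A + P' * ∑ i, (2 * a i * (((y i).val : ℕ) : ZMod (p ^ m)))
              * (((z i).val : ℕ) : ZMod (p ^ m)))
            = χ A * ∏ i, psiC χ (p ^ r) r (d i * z i) := by
        intro z
        set B : ZMod (p ^ m) := ∑ i, (2 * a i * (((y i).val : ℕ) : ZMod (p ^ m)))
            * (((z i).val : ℕ) : ZMod (p ^ m)) with hB
        have hfac : A + P' * B = ↑u * (1 + P' * (↑u⁻¹ * B)) := by
          linear_combination (-1 : ZMod (p ^ m)) * hspec + (-(P' * B)) * hmulinv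
        rw [hfac, map_mul, hspec, psiC_eval χ rfl h2r (pow_dvd_pow p hrm)]
        congr 1
        have hz : ∀ i, ρ ((((z i).val : ℕ) : ZMod (p ^ m))) = z i := fun i => by
          rw [map_natCast]; exact ZMod.natCast_rightInverse (z i)
        have hρB : ρ (↑u⁻¹ * B) = ∑ i, d i * z i := by
          rw [map_mul, hB, map_sum, Finset.mul_sum]
          refine Finset.sum_congr rfl fun i _ => ?_
          rw [map_mul, hz i, hd]
          simp only [map_mul]
          ring
        rw [hρB, psiC_finsum χ rfl h2r]
      have hcond : ∀ i : Fin n, (d i = 0) ↔ ((((y i).val : ℕ) : ZMod (p ^ r)) = 0) := by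
        intro i
        have hx : d i = ρ (↑u⁻¹ * (2 * a i)) * (((y i).val : ℕ) : ZMod (p ^ r)) := by
          rw [hd, ← map_natCast ρ ((y i).val), ← map_mul]
          congr 1
          ring
        have hxu : IsUnit (ρ (↑u⁻¹ * (2 * a i))) :=
          ((u⁻¹.isUnit).mul (h2unit.mul (ha i))).map ρ
        rw [hx, ← hxu.unit_spec, Units.mul_right_eq_zero]
      calc ∑ z : Fin n → ZMod (p ^ r),
            χ (A + P' * ∑ i, (2 * a i * (((y i).val : ℕ) : ZMod (p ^ m)))
                * (((z i).val : ℕ) : ZMod (p ^ m)))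
          = ∑ z : Fin n → ZMod (p ^ r), (χ A * ∏ i, psiC χ (p ^ r) r (d i * z i)) :=
            Finset.sum_congr rfl fun z _ => hzstep z
        _ = χ A * ∑ z : Fin n → ZMod (p ^ r), ∏ i, psiC χ (p ^ r) r (d i * z i) := by
            rw [Finset.mul_sum]
        _ = χ A * ∏ i, ∑ t : ZMod (p ^ r), psiC χ (p ^ r) r (d i * t) := by
            congr 1
            rw [Finset.prod_univ_sum, Fintype.piFinset_univ]
        _ = χ A * ∏ i, (if ((((y i).val : ℕ) : ZMod (p ^ r)) = 0) then ((p ^ r : ℕ) : ℂ) else 0) := by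
            congr 1
            refine Finset.prod_congr rfl fun i _ => ?_
            rw [sum_psiC χ rfl hr1 h2r hpr (d i)]
            by_cases hdi : (((y i).val : ℕ) : ZMod (p ^ r)) = 0
            · rw [if_pos hdi, if_pos ((hcond i).mpr hdi)]
            · rw [if_neg hdi, if_neg (fun h => hdi ((hcond i).mp h))]
    · rw [MulChar.map_nonunit χ hAu, zero_mul]
      refine Finset.sum_eq_zero fun z _ => ?_
      refine MulChar.map_nonunit χ ?_
      intro hU
      apply hAu
      have hπeq : π (A + P' * ∑ i, (2 * a i * (((y i).val : ℕ) : ZMod (p ^ m)))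
          * (((z i).val : ℕ) : ZMod (p ^ m))) = π A := by
        rw [map_add, map_mul, hπP', zero_mul, add_zero]
      exact (hπunit A).mpr (hπeq ▸ (hπunit _).mp hU)
  -- apply hexp and hinner
  have hsum2 : ∀ y : Fin n → ZMod (p ^ (m - r)),
      ∑ z : Fin n → ZMod (p ^ r), χ (a₀ + ∑ i, a i * (e (y, z)) i ^ 2)
      = χ (a₀ + ∑ i, a i * (((y i).val : ℕ) : ZMod (p ^ m)) ^ 2)
        * ∏ i, (if ((((y i).val : ℕ) : ZMod (p ^ r)) = 0) then ((p ^ r : ℕ) : ℂ) else 0) := by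
    intro y
    rw [← hinner y]
    exact Finset.sum_congr rfl fun z _ => by rw [hexp y z]
  rw [Finset.sum_congr rfl (fun y _ => hsum2 y)]
  -- collapse the product of indicators
  have hprodite : ∀ y : Fin n → ZMod (p ^ (m - r)),
      (∏ i, if ((((y i).val : ℕ) : ZMod (p ^ r)) = 0) then ((p ^ r : ℕ) : ℂ) else 0)
      = if (∀ i, (((y i).val : ℕ) : ZMod (p ^ r)) = 0) then ((p ^ r : ℕ) : ℂ) ^ n else 0 := by
    intro y
    by_cases hall : ∀ i, (((y i).val : ℕ) : ZMod (p ^ r)) = 0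
    · rw [if_pos hall, Finset.prod_congr rfl (fun i _ => if_pos (hall i)),
        Finset.prod_const, Finset.card_univ, Fintype.card_fin]
    · rw [if_neg hall]
      push_neg at hall
      obtain ⟨i₀, hi₀⟩ := hall
      exact Finset.prod_eq_zero (Finset.mem_univ i₀) (if_neg hi₀)
  have hsum3 : ∑ y : Fin n → ZMod (p ^ (m - r)),
      χ (a₀ + ∑ i, a i * (((y i).val : ℕ) : ZMod (p ^ m)) ^ 2)
        * ∏ i, (if ((((y i).val : ℕ) : ZMod (p ^ r)) = 0) then ((p ^ r : ℕ) : ℂ) else 0)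
      = ∑ y ∈ Finset.univ.filter
            (fun y : Fin n → ZMod (p ^ (m - r)) => ∀ i, (((y i).val : ℕ) : ZMod (p ^ r)) = 0),
          χ (a₀ + ∑ i, a i * (((y i).val : ℕ) : ZMod (p ^ m)) ^ 2) * ((p ^ r : ℕ) : ℂ) ^ n := by
    rw [Finset.sum_filter]
    refine Finset.sum_congr rfl fun y _ => ?_
    rw [hprodite y, mul_ite, mul_zero]
  rw [hsum3]
  -- reparametrize the filtered sum by w : Fin n → ZMod (p ^ s)
  have hps : p ^ r * p ^ s = p ^ (m - r) := by rw [← pow_add]; congr 1; omega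
  set g : (Fin n → ZMod (p ^ s)) → (Fin n → ZMod (p ^ (m - r))) :=
    fun w i => ((p ^ r * (w i).val : ℕ) : ZMod (p ^ (m - r))) with hg
  set ginv : (Fin n → ZMod (p ^ (m - r))) → (Fin n → ZMod (p ^ s)) :=
    fun y i => (((y i).val / p ^ r : ℕ) : ZMod (p ^ s)) with hginv
  have hgval : ∀ (w : Fin n → ZMod (p ^ s)) (i : Fin n), (g w i).val = p ^ r * (w i).val := by
    intro w i
    rw [hg]
    simp only []
    rw [ZMod.val_natCast, Nat.mod_eq_of_lt]
    calc p ^ r * (w i).val < p ^ r * p ^ s :=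
          (Nat.mul_lt_mul_left (by positivity)).mpr (ZMod.val_lt (w i))
      _ = p ^ (m - r) := hps
  have hmem : ∀ w : Fin n → ZMod (p ^ s), ∀ i, (((g w i).val : ℕ) : ZMod (p ^ r)) = 0 := by
    intro w i
    rw [hgval]
    push_cast
    rw [show ((p : ZMod (p ^ r)) ^ r) = ((p ^ r : ℕ) : ZMod (p ^ r)) by push_cast; ring,
      ZMod.natCast_self, zero_mul]
  have hsum4 : ∑ y ∈ Finset.univ.filter
        (fun y : Fin n → ZMod (p ^ (m - r)) => ∀ i, (((y i).val : ℕ) : ZMod (p ^ r)) = 0),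
        χ (a₀ + ∑ i, a i * (((y i).val : ℕ) : ZMod (p ^ m)) ^ 2) * ((p ^ r : ℕ) : ℂ) ^ n
      = ∑ w : Fin n → ZMod (p ^ s),
          χ (a₀ + ∑ i, a i *
            ((p : ZMod (p ^ m)) ^ r * (((w i).val : ℕ) : ZMod (p ^ m))) ^ 2)
            * ((p ^ r : ℕ) : ℂ) ^ n := by
    refine Finset.sum_nbij' ginv g ?_ ?_ ?_ ?_ ?_
    · intro y _; exact Finset.mem_univ _
    · intro w _
      rw [Finset.mem_filter]
      exact ⟨Finset.mem_univ _, hmem w⟩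
    · -- left inverse : g (ginv y) = y on the filter
      intro y hy
      rw [Finset.mem_filter] at hy
      funext i
      have hdvd : p ^ r ∣ (y i).val := by
        rw [← ZMod.natCast_eq_zero_iff]
        exact hy.2 i
      have hltq : (y i).val / p ^ r < p ^ s := by
        rw [Nat.div_lt_iff_lt_mul (by positivity : 0 < p ^ r)]
        calc (y i).val < p ^ (m - r) := ZMod.val_lt (y i)
          _ = p ^ s * p ^ r := by rw [mul_comm]; exact hps.symm
      rw [hg, hginv]
      simp only []
      rw [ZMod.val_natCast, Nat.mod_eq_of_lt hltq, Nat.mul_div_cancel' hdvd]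
      exact ZMod.natCast_rightInverse (y i)
    · -- right inverse : ginv (g w) = w
      intro w _
      funext i
      rw [hginv]
      simp only []
      rw [hgval, Nat.mul_div_cancel_left _ (by positivity : 0 < p ^ r)]
      exact ZMod.natCast_rightInverse (w i)
    · intro y hy
      rw [Finset.mem_filter] at hy
      have harg : ∀ i : Fin n, a i * (((y i).val : ℕ) : ZMod (p ^ m)) ^ 2
          = a i * ((p : ZMod (p ^ m)) ^ r * (((ginv y i).val : ℕ) : ZMod (p ^ m))) ^ 2 := by
        intro i
        have hdvd : p ^ r ∣ (y i).val := by
          rw [← ZMod.natCast_eq_zero_iff]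
          exact hy.2 i
        have hltq : (y i).val / p ^ r < p ^ s := by
          rw [Nat.div_lt_iff_lt_mul (by positivity : 0 < p ^ r)]
          calc (y i).val < p ^ (m - r) := ZMod.val_lt (y i)
            _ = p ^ s * p ^ r := by rw [mul_comm]; exact hps.symm
        have hval : (ginv y i).val = (y i).val / p ^ r := by
          rw [hginv]
          simp only []
          rw [ZMod.val_natCast, Nat.mod_eq_of_lt hltq]
        rw [hval]
        congr 1
        rw [show (((y i).val : ℕ) : ZMod (p ^ m))
            = ((p ^ r * ((y i).val / p ^ r) : ℕ) : ZMod (p ^ m)) by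
          rw [Nat.mul_div_cancel' hdvd]]
        push_cast
        ring
      rw [Finset.sum_congr rfl (fun i _ => harg i)]
  rw [hsum4, ← Finset.sum_mul, mul_comm]
  congr 1
  push_cast
  ring

end Master

/-- character sum of a diagonal quadratic polynomial with unit
coefficients:
`∑_x χ(a₀ + a₁x₁² + … + aₙxₙ²) = χ(a₀)·χ_{1/2}(a₀ⁿ a₁⋯aₙ)^m·α̃(χ,m)ⁿ`. -/
theorem charSum_diagonal_quadratic
    (p m n : ℕ) [Fact p.Prime] (hodd : p ≠ 2) (hm : 1 < m)
    (χ : MulChar (ZMod (p ^ m)) ℂ) (hχ : MulPrimitive p m χ)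
    (a₀ : ZMod (p ^ m)) (a : Fin n → ZMod (p ^ m))
    (ha₀ : IsUnit a₀) (ha : ∀ i, IsUnit (a i)) :
    ∑ x : Fin n → ZMod (p ^ m), χ (a₀ + ∑ i, a i * (x i) ^ 2) =
      χ a₀ *
        ((legendreSym p
            ((ZMod.castHom (dvd_pow_self p (by omega : m ≠ 0)) (ZMod p)
              (a₀ ^ n * ∏ i, a i)).val) : ℂ)) ^ m *
        (∑ y : ZMod (p ^ m), χ (1 + y ^ 2)) ^ n := by
  have hpr := prim_nontrivial hm χ hχ
  have hmain := master χ hodd hm hpr n a₀ a ha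
  -- the one-variable instance of the master lemma for α
  have halpha : (∑ y : ZMod (p ^ m), χ (1 + y ^ 2)) =
      (p : ℂ) ^ (m / 2) *
        ∑ w : ZMod (p ^ (m - 2 * (m / 2))),
          χ (1 + ((p : ZMod (p ^ m)) ^ (m / 2) * ((w.val : ℕ) : ZMod (p ^ m))) ^ 2) := by
    have h := master χ hodd hm hpr 1 1 (fun _ => 1) (fun _ => isUnit_one)
    have e1 : ∑ x : Fin 1 → ZMod (p ^ m), χ (1 + ∑ i, (fun _ => (1 : ZMod (p ^ m))) i * (x i) ^ 2)
        = ∑ y : ZMod (p ^ m), χ (1 + y ^ 2) := by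
      apply Fintype.sum_bijective (fun x : Fin 1 → ZMod (p ^ m) => x 0)
        (Equiv.funUnique (Fin 1) (ZMod (p ^ m))).bijective
      intro x
      simp [Fin.sum_univ_one]
    have e2 : ∑ w : Fin 1 → ZMod (p ^ (m - 2 * (m / 2))),
        χ (1 + ∑ i, (fun _ => (1 : ZMod (p ^ m))) i *
          ((p : ZMod (p ^ m)) ^ (m / 2) * (((w i).val : ℕ) : ZMod (p ^ m))) ^ 2)
        = ∑ w : ZMod (p ^ (m - 2 * (m / 2))),
            χ (1 + ((p : ZMod (p ^ m)) ^ (m / 2) * ((w.val : ℕ) : ZMod (p ^ m))) ^ 2) := by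
      apply Fintype.sum_bijective (fun x : Fin 1 → ZMod (p ^ (m - 2 * (m / 2))) => x 0)
        (Equiv.funUnique (Fin 1) (ZMod (p ^ (m - 2 * (m / 2))))).bijective
      intro x
      simp [Fin.sum_univ_one]
    rw [e1, e2, pow_one] at h
    exact h
  set π : ZMod (p ^ m) →+* ZMod p :=
    ZMod.castHom (dvd_pow_self p (by omega : m ≠ 0)) (ZMod p) with hπ
  set V : ZMod p := π (a₀ ^ n * ∏ i, a i) with hV
  have hπne : ∀ x : ZMod (p ^ m), IsUnit x → π x ≠ 0 := fun x hx => (hx.map π).ne_zero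
  have hVne : V ≠ 0 := by
    rw [hV, map_mul, map_pow, map_prod]
    exact mul_ne_zero (pow_ne_zero n (hπne a₀ ha₀))
      (Finset.prod_ne_zero_iff.mpr fun i _ => hπne (a i) (ha i))
  have hVcast : ((V.val : ℤ) : ZMod p) ≠ 0 := by
    push_cast
    rw [ZMod.natCast_val, ZMod.cast_id]
    exact hVne
  have hleg : (legendreSym p (V.val : ℤ) : ℂ) = ((quadraticChar (ZMod p) V : ℤ) : ℂ) := by
    have : legendreSym p (V.val : ℤ) = quadraticChar (ZMod p) (((V.val : ℤ) : ZMod p)) := rfl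
    rw [this]
    congr 2
    push_cast
    rw [ZMod.natCast_val, ZMod.cast_id]
  rcases Nat.even_or_odd m with hpar | hpar
  · -- m even
    have hm2 : m % 2 = 0 := Nat.even_iff.mp hpar
    have hs0 : m - 2 * (m / 2) = 0 := by omega
    rw [hs0] at hmain halpha
    have hval1 : ∀ x : ZMod (p ^ 0), x.val = 0 :=
      fun x => Nat.lt_one_iff.mp (by simpa using ZMod.val_lt x)
    have hsA : ∑ w : Fin n → ZMod (p ^ 0), χ (a₀ + ∑ i, a i *
        ((p : ZMod (p ^ m)) ^ (m / 2) * (((w i).val : ℕ) : ZMod (p ^ m))) ^ 2) = χ a₀ := by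
      have hterm : ∀ w : Fin n → ZMod (p ^ 0), χ (a₀ + ∑ i, a i *
          ((p : ZMod (p ^ m)) ^ (m / 2) * (((w i).val : ℕ) : ZMod (p ^ m))) ^ 2) = χ a₀ := by
        intro w
        congr 1
        simp only [hval1, Nat.cast_zero, mul_zero, zero_pow two_ne_zero, Finset.sum_const_zero, add_zero]
      rw [Finset.sum_congr rfl (fun w _ => hterm w), Finset.sum_const, Finset.card_univ]
      have hc : Fintype.card (Fin n → ZMod (p ^ 0)) = 1 := by
        simp [Fintype.card_pi, ZMod.card]
      rw [hc, one_smul]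
    have hsB : ∑ w : ZMod (p ^ 0), χ (1 +
        ((p : ZMod (p ^ m)) ^ (m / 2) * ((w.val : ℕ) : ZMod (p ^ m))) ^ 2) = 1 := by
      have hterm : ∀ w : ZMod (p ^ 0), χ (1 +
          ((p : ZMod (p ^ m)) ^ (m / 2) * ((w.val : ℕ) : ZMod (p ^ m))) ^ 2) = 1 := by
        intro w
        rw [show (1 : ZMod (p ^ m)) + ((p : ZMod (p ^ m)) ^ (m / 2)
            * ((w.val : ℕ) : ZMod (p ^ m))) ^ 2 = 1 by simp only [hval1, Nat.cast_zero, mul_zero, zero_pow two_ne_zero, add_zero], map_one]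
      have hc : Fintype.card (ZMod (p ^ 0)) = 1 := by simp [ZMod.card]
      rw [Finset.sum_congr rfl (fun w _ => hterm w), Finset.sum_const, Finset.card_univ,
        hc, one_smul]
    rw [hmain, hsA, halpha, hsB, mul_one]
    have hlegm : ((legendreSym p (V.val : ℤ) : ℂ)) ^ m = 1 := by
      rcases legendreSym.eq_one_or_neg_one p hVcast with h1 | h1
      · rw [h1]; norm_num
      · rw [h1]
        push_cast
        exact Even.neg_one_pow hpar
    rw [hlegm]
    ring
  · -- m odd
    have hm2 : m % 2 = 1 := Nat.odd_iff.mp hpar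
    have hs1 : m - 2 * (m / 2) = 1 := by omega
    rw [hs1] at hmain halpha
    have hq1 : p = p ^ 1 := (pow_one p).symm
    have h21 : 2 * 1 ≤ m := by omega
    set jmap : ZMod p → ZMod (p ^ 1) := fun c => ((c.val : ℕ) : ZMod (p ^ 1)) with hj
    have hjval : ∀ c : ZMod p, (jmap c).val = c.val := by
      intro c
      rw [hj]
      simp only []
      rw [ZMod.val_natCast, Nat.mod_eq_of_lt (by rw [pow_one]; exact ZMod.val_lt c)]
    have hjbij : Function.Bijective jmap := by
      refine (Fintype.bijective_iff_injective_and_card jmap).mpr ⟨?_, ?_⟩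
      · intro c c' h
        have h2 := congrArg ZMod.val h
        rw [hjval, hjval] at h2
        exact ZMod.val_injective _ h2
      · rw [ZMod.card, ZMod.card, pow_one]
    have hdvd1 : p ∣ p ^ m := dvd_pow_self p (by omega : m ≠ 0)
    have hτadd : ∀ x y : ZMod p, psiC χ p 1 (x + y) = psiC χ p 1 x * psiC χ p 1 y :=
      psiC_add χ hq1 h21
    have hτeval : ∀ C : ZMod (p ^ m), χ (1 + (p : ZMod (p ^ m)) ^ (m - 1) * C)
        = psiC χ p 1 (ZMod.castHom hdvd1 (ZMod p) C) := psiC_eval χ hq1 h21 hdvd1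
    have hτnt : ∃ x : ZMod p, psiC χ p 1 x ≠ 1 := by
      obtain ⟨e, he⟩ := hpr
      exact ⟨ZMod.castHom hdvd1 (ZMod p) e, by rw [← hτeval e]; exact he⟩
    have hπW : ∀ c : ZMod p, ZMod.castHom hdvd1 (ZMod p) (((c.val : ℕ) : ZMod (p ^ m))) = c := by
      intro c
      rw [map_natCast]
      exact ZMod.natCast_rightInverse c
    set K : ℂ := ∑ t : ZMod p, psiC χ p 1 (t ^ 2) with hK
    have hpow2 : ((p : ZMod (p ^ m)) ^ (m / 2)) ^ 2 = (p : ZMod (p ^ m)) ^ (m - 1) := by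
      rw [← pow_mul]
      congr 1
      omega
    set u₀ := ha₀.unit with hu₀
    have hspec : (↑u₀ : ZMod (p ^ m)) = a₀ := ha₀.unit_spec
    have hmulinv : (↑u₀ : ZMod (p ^ m)) * ↑u₀⁻¹ = 1 := u₀.mul_inv
    set b : Fin n → ZMod p := fun i => ZMod.castHom hdvd1 (ZMod p) (↑u₀⁻¹ * a i) with hb
    have hbne : ∀ i, b i ≠ 0 := fun i =>
      (((u₀⁻¹.isUnit).mul (ha i)).map (ZMod.castHom hdvd1 (ZMod p))).ne_zero
    have hsA : ∑ w : Fin n → ZMod (p ^ 1), χ (a₀ + ∑ i, a i *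
          ((p : ZMod (p ^ m)) ^ (m / 2) * (((w i).val : ℕ) : ZMod (p ^ m))) ^ 2)
        = χ a₀ * ∏ i, (((quadraticChar (ZMod p) (b i) : ℤ) : ℂ) * K) := by
      have ht : ∑ w : Fin n → ZMod (p ^ 1), χ (a₀ + ∑ i, a i *
            ((p : ZMod (p ^ m)) ^ (m / 2) * (((w i).val : ℕ) : ZMod (p ^ m))) ^ 2)
          = ∑ c : Fin n → ZMod p, χ (a₀ + ∑ i, a i *
            ((p : ZMod (p ^ m)) ^ (m / 2) * (((c i).val : ℕ) : ZMod (p ^ m))) ^ 2) := by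
        refine (Fintype.sum_equiv (Equiv.piCongrRight fun _ : Fin n => Equiv.ofBijective jmap hjbij)
          _ _ fun c => ?_).symm
        congr 2
        refine Finset.sum_congr rfl fun i _ => ?_
        have : ((Equiv.piCongrRight fun _ : Fin n => Equiv.ofBijective jmap hjbij) c i) = jmap (c i) := rfl
        rw [this, hjval]
      rw [ht]
      have hterm : ∀ c : Fin n → ZMod p, χ (a₀ + ∑ i, a i *
            ((p : ZMod (p ^ m)) ^ (m / 2) * (((c i).val : ℕ) : ZMod (p ^ m))) ^ 2)
          = χ a₀ * ∏ i, psiC χ p 1 (b i * (c i) ^ 2) := by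
        intro c
        have hS : ∑ i, a i * ((p : ZMod (p ^ m)) ^ (m / 2) * (((c i).val : ℕ) : ZMod (p ^ m))) ^ 2
            = (p : ZMod (p ^ m)) ^ (m - 1) * ∑ i, a i * (((c i).val : ℕ) : ZMod (p ^ m)) ^ 2 := by
          rw [Finset.mul_sum]
          refine Finset.sum_congr rfl fun i _ => ?_
          rw [mul_pow, hpow2]
          ring
        have harg : a₀ + ∑ i, a i *
              ((p : ZMod (p ^ m)) ^ (m / 2) * (((c i).val : ℕ) : ZMod (p ^ m))) ^ 2
            = ↑u₀ * (1 + (p : ZMod (p ^ m)) ^ (m - 1) *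
                (↑u₀⁻¹ * ∑ i, a i * (((c i).val : ℕ) : ZMod (p ^ m)) ^ 2)) := by
          rw [hS]
          linear_combination (-1 : ZMod (p ^ m)) * hspec
            + (-((p : ZMod (p ^ m)) ^ (m - 1) *
              (∑ i, a i * (((c i).val : ℕ) : ZMod (p ^ m)) ^ 2))) * hmulinv
        rw [harg, map_mul, hspec, hτeval]
        congr 1
        have hcast : ZMod.castHom hdvd1 (ZMod p)
              (↑u₀⁻¹ * ∑ i, a i * (((c i).val : ℕ) : ZMod (p ^ m)) ^ 2)
            = ∑ i, b i * (c i) ^ 2 := by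
          rw [map_mul, map_sum, Finset.mul_sum]
          refine Finset.sum_congr rfl fun i _ => ?_
          rw [map_mul, map_pow, hπW, hb]
          simp only [map_mul]
          ring
        rw [hcast, psiC_finsum χ hq1 h21]
      rw [Finset.sum_congr rfl fun c _ => hterm c, ← Finset.mul_sum]
      congr 1
      have hps := Finset.prod_univ_sum (fun _ : Fin n => (Finset.univ : Finset (ZMod p)))
        (fun i t => psiC χ p 1 (b i * t ^ 2))
      rw [Fintype.piFinset_univ] at hps
      rw [← hps]
      refine Finset.prod_congr rfl fun i _ => ?_
      rw [quad_twist hodd (psiC χ p 1) hτadd hτnt (hbne i), hK]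
    have hsB : ∑ w : ZMod (p ^ 1), χ (1 +
        ((p : ZMod (p ^ m)) ^ (m / 2) * ((w.val : ℕ) : ZMod (p ^ m))) ^ 2) = K := by
      have ht : ∑ w : ZMod (p ^ 1), χ (1 +
            ((p : ZMod (p ^ m)) ^ (m / 2) * ((w.val : ℕ) : ZMod (p ^ m))) ^ 2)
          = ∑ c : ZMod p, χ (1 +
            ((p : ZMod (p ^ m)) ^ (m / 2) * ((c.val : ℕ) : ZMod (p ^ m))) ^ 2) := by
        refine (Fintype.sum_bijective jmap hjbij _ _ fun c => ?_).symm
        rw [hjval]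
      rw [ht, hK]
      refine Finset.sum_congr rfl fun c _ => ?_
      have harg : (1 : ZMod (p ^ m)) +
            ((p : ZMod (p ^ m)) ^ (m / 2) * ((c.val : ℕ) : ZMod (p ^ m))) ^ 2
          = 1 + (p : ZMod (p ^ m)) ^ (m - 1) * ((c.val : ℕ) : ZMod (p ^ m)) ^ 2 := by
        rw [mul_pow, hpow2]
      rw [harg, hτeval]
      congr 1
      rw [map_pow, hπW]
    rw [hmain, hsA, halpha, hsB]
    -- final bookkeeping with the quadratic character
    have hVne' : quadraticChar (ZMod p) V ≠ 0 := by
      intro h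
      have h3 : quadraticChar (ZMod p) V * quadraticChar (ZMod p) V = 1 := by
        have := quadraticChar_sq_one hVne
        rwa [pow_two] at this
      rw [h, mul_zero] at h3
      exact one_ne_zero h3.symm
    have hqm' : quadraticChar (ZMod p) V ^ m = quadraticChar (ZMod p) V := by
      conv_lhs => rw [show m = 2 * (m / 2) + 1 by omega]
      have h3 : quadraticChar (ZMod p) V * quadraticChar (ZMod p) V = 1 := by
        have := quadraticChar_sq_one hVne
        rwa [pow_two] at this
      rw [pow_succ, pow_mul, pow_two, h3, one_pow, one_mul]
    have hVb : quadraticChar (ZMod p) V = ∏ i, quadraticChar (ZMod p) (b i) := by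
      have ha0ne : π a₀ ≠ 0 := hπne a₀ ha₀
      have hinv2 : quadraticChar (ZMod p) (ZMod.castHom hdvd1 (ZMod p) (↑u₀⁻¹ : ZMod (p ^ m)))
          = quadraticChar (ZMod p) (π a₀) := by
        have h1 : ZMod.castHom hdvd1 (ZMod p) (↑u₀⁻¹ : ZMod (p ^ m)) * π a₀ = 1 := by
          have : (↑u₀⁻¹ : ZMod (p ^ m)) * a₀ = 1 := by rw [← hspec, u₀.inv_mul]
          calc ZMod.castHom hdvd1 (ZMod p) (↑u₀⁻¹ : ZMod (p ^ m)) * π a₀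
              = ZMod.castHom hdvd1 (ZMod p) ((↑u₀⁻¹ : ZMod (p ^ m)) * a₀) := by rw [map_mul]
            _ = 1 := by rw [this, map_one]
        have h2 : quadraticChar (ZMod p) (ZMod.castHom hdvd1 (ZMod p) (↑u₀⁻¹ : ZMod (p ^ m)))
            * quadraticChar (ZMod p) (π a₀) = 1 := by
          rw [← map_mul, h1, map_one]
        have h3 : quadraticChar (ZMod p) (π a₀) * quadraticChar (ZMod p) (π a₀) = 1 := by
          have := quadraticChar_sq_one ha0ne
          rwa [pow_two] at this
        have hne : quadraticChar (ZMod p) (π a₀) ≠ 0 := by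
          intro h
          rw [h, mul_zero] at h3
          exact one_ne_zero h3.symm
        exact mul_right_cancel₀ hne (h2.trans h3.symm)
      have hVfac : V = π a₀ ^ n * ∏ i, π (a i) := by
        rw [hV, map_mul, map_pow, map_prod]
      have hbfac : ∀ i, b i = ZMod.castHom hdvd1 (ZMod p) (↑u₀⁻¹ : ZMod (p ^ m)) * π (a i) :=
        fun i => by rw [hb]; simp only [map_mul]; rfl
      have hper : ∀ i : Fin n, quadraticChar (ZMod p) (b i)
          = quadraticChar (ZMod p) (ZMod.castHom hdvd1 (ZMod p) (↑u₀⁻¹ : ZMod (p ^ m)))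
            * quadraticChar (ZMod p) (π (a i)) := fun i => by rw [hbfac i, map_mul]
      rw [hVfac, map_mul, map_pow, map_prod, Finset.prod_congr rfl (fun i _ => hper i),
        Finset.prod_mul_distrib, Finset.prod_const, Finset.card_univ, Fintype.card_fin, hinv2]
    have hqm : ((legendreSym p (V.val : ℤ) : ℂ)) ^ m
        = ∏ i, ((quadraticChar (ZMod p) (b i) : ℤ) : ℂ) := by
      rw [hleg]
      calc ((quadraticChar (ZMod p) V : ℤ) : ℂ) ^ m
          = ((quadraticChar (ZMod p) V ^ m : ℤ) : ℂ) := by push_cast; ring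
        _ = ((quadraticChar (ZMod p) V : ℤ) : ℂ) := by rw [hqm']
        _ = (((∏ i, quadraticChar (ZMod p) (b i) : ℤ)) : ℂ) := by rw [hVb]
        _ = ∏ i, ((quadraticChar (ZMod p) (b i) : ℤ) : ℂ) := by push_cast; ring
    rw [hqm, Finset.prod_mul_distrib, Finset.prod_const, Finset.card_univ, Fintype.card_fin,
      mul_pow]
    ring
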